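/- arXiv:math/0211323 — 2 statements merged into one kernel-verified Lean document; each statement's English description precedes it below -/
import Mathlib

section
/- Let A be the harmonic oscillator Hamiltonian Af = −Δf + |x|²f on ℝ^d with eigenvalues a_i (w.r.t. the Hermite basis e_i). Then A^{−d} is a Hilbert–Schmidt operator on L²(ℝ^d), i.e. Σ_{i=0}^∞ a_i^{−2d} < ∞; equivalently, the embedding of the weighted Sobolev space ℋ_n into ℋ_{n−2d} is Hilbert–Schmidt for every n ∈ ℤ. -/
lemma aux_w_summable : Summable fun n : ℕ => (((n : ℝ) + 1) ^ 2)⁻¹ := by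
  have h2 : Summable fun n : ℕ => ((n : ℝ) ^ 2)⁻¹ := by
    simpa [Real.rpow_natCast, one_div] using
      (Real.summable_one_div_nat_rpow.mpr (by norm_num : (1:ℝ) < 2))
  have := h2.comp_injective (add_left_injective 1 : Function.Injective fun n : ℕ => n + 1)
  exact this.congr fun n => by simp [Function.comp]

lemma aux_prod_summable (d : ℕ) :
    Summable fun α : Fin d → ℕ => ∏ i, (((α i : ℝ) + 1) ^ 2)⁻¹ := by
  induction d with
  | zero =>
    simp only [Finset.univ_eq_empty, Finset.prod_empty]
    exact summable_of_finite_support (Set.toFinite _)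
  | succ n ih =>
    have h := (aux_w_summable.mul_of_nonneg ih
      (fun _ => by positivity) (fun _ => Finset.prod_nonneg fun _ _ => by positivity))
    refine (((Fin.consEquiv (fun _ : Fin (n + 1) => ℕ)).symm.summable_iff).mpr h).congr fun α => ?_
    simp [Fin.consEquiv, Function.comp, Fin.prod_univ_succ, Fin.tail, mul_comm]

/-- The harmonic oscillator Hamiltonian `A = −Δ + |x|²` on `ℝ^d` has eigenvalues
`a_α = 2|α| + d` indexed by multi-indices `α ∈ ℕ₀^d` (Hermite basis).  The operator
`A^{−d}` is Hilbert–Schmidt, i.e. `∑_α a_α^{−2d} < ∞`; equivalently the embedding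
`ℋ_n ⊂ ℋ_{n−2d}` of weighted Sobolev spaces is Hilbert–Schmidt for every `n`. -/
theorem stmt7 {d : ℕ} (hd : 0 < d) :
    Summable fun α : Fin d → ℕ =>
      (((2 * ∑ i, α i + d : ℕ) : ℝ) ^ (2 * d))⁻¹ := by
  apply Summable.of_nonneg_of_le (fun α => by positivity) _ (aux_prod_summable d)
  intro α
  have hnat : (∏ i, (α i + 1) ^ 2) ≤ (2 * ∑ i, α i + d) ^ (2 * d) := by
    calc ∏ i, (α i + 1) ^ 2 ≤ ∏ _i : Fin d, (2 * ∑ j, α j + d) ^ 2 := by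
          apply Finset.prod_le_prod (fun _ _ => Nat.zero_le _)
          intro i _
          apply Nat.pow_le_pow_left
          have h1 : α i ≤ ∑ j, α j :=
            Finset.single_le_sum (fun _ _ => Nat.zero_le _) (Finset.mem_univ i)
          omega
      _ = (2 * ∑ i, α i + d) ^ (2 * d) := by
          rw [Finset.prod_const, Finset.card_univ, Fintype.card_fin, ← pow_mul, mul_comm]
  have hkey : (∏ i, ((α i : ℝ) + 1) ^ 2) ≤ ((2 * ∑ i, α i + d : ℕ) : ℝ) ^ (2 * d) := by
    have := (Nat.cast_le (α := ℝ)).mpr hnat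
    push_cast at this
    convert this using 2 <;> push_cast <;> rfl
  have hpos : (0:ℝ) < ∏ i, ((α i : ℝ) + 1) ^ 2 :=
    Finset.prod_pos fun i _ => by positivity
  calc (((2 * ∑ i, α i + d : ℕ) : ℝ) ^ (2 * d))⁻¹
      ≤ (∏ i, ((α i : ℝ) + 1) ^ 2)⁻¹ := inv_anti₀ hpos hkey
    _ = ∏ i, (((α i : ℝ) + 1) ^ 2)⁻¹ := by rw [← Finset.prod_inv_distrib]
end

section
/- Coercivity identity on ℝ^d: let g > 0 be a suitably smooth density on ℝ^d with logarithmic derivative b = ∇log g, and let Lf = −Δf − (b, ∇f). Then for f ∈ C_c^∞(ℝ^d), ∫ (Lf)² g dx = ∫ ‖∇²f‖²_{HS} g dx − ∫ (∇f, (∇b) ∇f) g dx. -/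
open MeasureTheory


variable {d : ℕ}
local notation "Ed" => EuclideanSpace ℝ (Fin d)

noncomputable def Dv (u : Ed → ℝ) (v : Ed) : Ed → ℝ := fun x => fderiv ℝ u x v

lemma Dv_smooth {u : Ed → ℝ} (hu : ContDiff ℝ (⊤ : ℕ∞) u) (v : Ed) : ContDiff ℝ (⊤ : ℕ∞) (Dv u v) :=
  (hu.fderiv_right (by simp)).clm_apply contDiff_const

lemma Dv_cs {u : Ed → ℝ} (hu : HasCompactSupport u) (v : Ed) : HasCompactSupport (Dv u v) :=
  hu.fderiv_apply ℝ v

lemma log_smooth {g : Ed → ℝ} (hgpos : ∀ x, 0 < g x) (hg : ContDiff ℝ (⊤ : ℕ∞) g) :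
    ContDiff ℝ (⊤ : ℕ∞) (fun z => Real.log (g z)) :=
  hg.log (fun x => (hgpos x).ne')

lemma Dv_log {g : Ed → ℝ} (hgpos : ∀ x, 0 < g x) (hg : ContDiff ℝ (⊤ : ℕ∞) g) (v : Ed) (x : Ed) :
    g x * Dv (fun z => Real.log (g z)) v x = Dv g v x := by
  have h := ((hg.differentiable (by simp) x).hasFDerivAt.log (hgpos x).ne').fderiv
  simp only [Dv, h]
  simp only [ContinuousLinearMap.coe_smul', Pi.smul_apply, smul_eq_mul]
  rw [← mul_assoc, mul_inv_cancel₀ (hgpos x).ne', one_mul]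

lemma Dv_mul {u w : Ed → ℝ} (hu : ContDiff ℝ (⊤ : ℕ∞) u) (hw : ContDiff ℝ (⊤ : ℕ∞) w) (v : Ed) (x : Ed) :
    Dv (fun z => u z * w z) v x = Dv u v x * w x + u x * Dv w v x := by
  simp only [Dv]
  rw [fderiv_fun_mul (hu.differentiable (by simp) x) (hw.differentiable (by simp) x)]
  simp [smul_eq_mul]; ring

lemma Dv_sum {ι : Type*} (s : Finset ι) {F : ι → Ed → ℝ} (hF : ∀ i, ContDiff ℝ (⊤ : ℕ∞) (F i))
    (v : Ed) (x : Ed) :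
    Dv (fun z => ∑ i ∈ s, F i z) v x = ∑ i ∈ s, Dv (F i) v x := by
  simp only [Dv]
  rw [fderiv_fun_sum (fun i _ => (hF i).differentiable (by simp) x)]
  simp

lemma Dv_neg {u : Ed → ℝ} (v : Ed) (x : Ed) : Dv (fun z => -(u z)) v x = -Dv u v x := by
  simp only [Dv, fderiv_neg]; simp

lemma Dv_sub {u w : Ed → ℝ} (hu : ContDiff ℝ (⊤ : ℕ∞) u) (hw : ContDiff ℝ (⊤ : ℕ∞) w) (v : Ed) (x : Ed) :
    Dv (fun z => u z - w z) v x = Dv u v x - Dv w v x := by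
  simp only [Dv]
  rw [fderiv_fun_sub (hu.differentiable (by simp) x) (hw.differentiable (by simp) x)]; simp

lemma Dv_comm {u : Ed → ℝ} (hu : ContDiff ℝ (⊤ : ℕ∞) u) (v w : Ed) (x : Ed) :
    Dv (Dv u w) v x = Dv (Dv u v) w x := by
  have hdiff : Differentiable ℝ (fderiv ℝ u) :=
    (hu.fderiv_right (m := (⊤ : ℕ∞)) (by simp)).differentiable (by simp)
  have h2 : HasFDerivAt (fderiv ℝ u) (fderiv ℝ (fderiv ℝ u) x) x := (hdiff x).hasFDerivAt
  have h1 : ∀ y, HasFDerivAt u (fderiv ℝ u y) y := fun y => (hu.differentiable (by simp) y).hasFDerivAt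
  have hsymm := second_derivative_symmetric h1 h2 v w
  have key : ∀ p a : Ed, Dv (Dv u a) p x = fderiv ℝ (fderiv ℝ u) x p a := by
    intro p a
    have hcomp : HasFDerivAt (Dv u a)
        ((ContinuousLinearMap.apply ℝ ℝ a).comp (fderiv ℝ (fderiv ℝ u) x)) x :=
      (ContinuousLinearMap.apply ℝ ℝ a).hasFDerivAt.comp x h2
    simp only [Dv, hcomp.fderiv]
    rfl
  rw [key v w, key w v, hsymm]

lemma cs_int {u : Ed → ℝ} (hu : Continuous u) (hcs : HasCompactSupport u) :
    Integrable u (volume : Measure Ed) :=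
  hu.integrable_of_hasCompactSupport hcs

lemma ibp {u w : Ed → ℝ} (hu : ContDiff ℝ (⊤ : ℕ∞) u) (hw : ContDiff ℝ (⊤ : ℕ∞) w)
    (hcs : HasCompactSupport u) (v : Ed) :
    ∫ x, u x * Dv w v x = - ∫ x, Dv u v x * w x := by
  apply integral_mul_fderiv_eq_neg_fderiv_mul_of_integrable
  · exact cs_int ((Dv_smooth hu v).continuous.mul hw.continuous) ((Dv_cs hcs v).mul_right)
  · exact cs_int (hu.continuous.mul (Dv_smooth hw v).continuous) (hcs.mul_right)
  · exact cs_int (hu.continuous.mul hw.continuous) (hcs.mul_right)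
  · exact fun y _ => hu.differentiable (by simp) y
  · exact fun y _ => hw.differentiable (by simp) y

lemma cs_fsum {ι : Type*} (s : Finset ι) (F : ι → Ed → ℝ)
    (h : ∀ i, HasCompactSupport (F i)) :
    HasCompactSupport (fun x => ∑ i ∈ s, F i x) := by
  classical
  induction s using Finset.induction_on with
  | empty => simp only [Finset.sum_empty]; simp [HasCompactSupport, tsupport, Function.support]
  | insert a s hx ih =>
      simp only [Finset.sum_insert hx]
      exact (h _).add ih

noncomputable def AA (f : Ed → ℝ) (e : Fin d → Ed) (i : Fin d) : Ed → ℝ := Dv f (e i)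
noncomputable def BB (g : Ed → ℝ) (e : Fin d → Ed) (i : Fin d) : Ed → ℝ :=
  Dv (fun z => Real.log (g z)) (e i)
noncomputable def HH (f : Ed → ℝ) (e : Fin d → Ed) (i j : Fin d) : Ed → ℝ := Dv (AA f e j) (e i)
noncomputable def TT (g f : Ed → ℝ) (e : Fin d → Ed) : Ed → ℝ :=
  fun x => -(∑ i, HH f e i i x) - ∑ i, BB g e i x * AA f e i x
noncomputable def GA (g f : Ed → ℝ) (e : Fin d → Ed) (i : Fin d) : Ed → ℝ :=
  fun z => g z * AA f e i z

lemma hAs {f : Ed → ℝ} {e : Fin d → Ed} (hf : ContDiff ℝ (⊤ : ℕ∞) f) (i : Fin d) :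
    ContDiff ℝ (⊤ : ℕ∞) (AA f e i) := Dv_smooth hf _

lemma hHs {f : Ed → ℝ} {e : Fin d → Ed} (hf : ContDiff ℝ (⊤ : ℕ∞) f) (i j : Fin d) :
    ContDiff ℝ (⊤ : ℕ∞) (HH f e i j) := Dv_smooth (hAs hf j) _

lemma hAc {f : Ed → ℝ} {e : Fin d → Ed} (i : Fin d) (hfc : HasCompactSupport f) :
    HasCompactSupport (AA f e i) := Dv_cs hfc _

lemma hHc {f : Ed → ℝ} {e : Fin d → Ed} (i j : Fin d) (hfc : HasCompactSupport f) :
    HasCompactSupport (HH f e i j) := Dv_cs (hAc j hfc) _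

lemma hBs {g : Ed → ℝ} {e : Fin d → Ed} (hgpos : ∀ x, 0 < g x) (hg : ContDiff ℝ (⊤ : ℕ∞) g)
    (i : Fin d) : ContDiff ℝ (⊤ : ℕ∞) (BB g e i) := Dv_smooth (log_smooth hgpos hg) _

lemma hTs {g f : Ed → ℝ} {e : Fin d → Ed} (hgpos : ∀ x, 0 < g x) (hg : ContDiff ℝ (⊤ : ℕ∞) g)
    (hf : ContDiff ℝ (⊤ : ℕ∞) f) : ContDiff ℝ (⊤ : ℕ∞) (TT g f e) := by
  unfold TT
  exact ((ContDiff.sum fun i _ => hHs hf i i).neg).sub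
    (ContDiff.sum fun i _ => (hBs hgpos hg i).mul (hAs hf i))

lemma hTc {g f : Ed → ℝ} {e : Fin d → Ed} (hfc : HasCompactSupport f) :
    HasCompactSupport (TT g f e) := by
  have h1 : HasCompactSupport (fun x : Ed => ∑ i, HH f e i i x) :=
    cs_fsum _ _ fun i => hHc i i hfc
  have h2 : HasCompactSupport (fun x : Ed => ∑ i, BB g e i x * AA f e i x) :=
    cs_fsum _ _ fun i => (hAc i hfc).mul_left
  have : TT g f e = fun x => (fun x : Ed => -∑ i, HH f e i i x) x
      + (fun x : Ed => -∑ i, BB g e i x * AA f e i x) x := by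
    funext x; unfold TT; ring
  rw [this]
  exact h1.neg.add h2.neg

lemma hGs {g f : Ed → ℝ} {e : Fin d → Ed} (hg : ContDiff ℝ (⊤ : ℕ∞) g) (hf : ContDiff ℝ (⊤ : ℕ∞) f)
    (i : Fin d) : ContDiff ℝ (⊤ : ℕ∞) (GA g f e i) := hg.mul (hAs hf i)

lemma hGc {g f : Ed → ℝ} {e : Fin d → Ed} (i : Fin d) (hfc : HasCompactSupport f) :
    HasCompactSupport (GA g f e i) := (hAc i hfc).mul_left

lemma stepA {g f : Ed → ℝ} {e : Fin d → Ed} (hgpos : ∀ x, 0 < g x) (hg : ContDiff ℝ (⊤ : ℕ∞) g)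
    (hf : ContDiff ℝ (⊤ : ℕ∞) f) (i j : Fin d) (x : Ed) :
    Dv (GA g f e i) (e j) x
      = g x * BB g e j x * AA f e i x + g x * HH f e j i x := by
  unfold GA
  rw [Dv_mul hg (hAs hf i)]
  rw [show Dv g (e j) x = g x * BB g e j x from (Dv_log hgpos hg (e j) x).symm]
  rfl

lemma hHsymm {f : Ed → ℝ} {e : Fin d → Ed} (hf : ContDiff ℝ (⊤ : ℕ∞) f) (i j : Fin d) (x : Ed) :
    HH f e j i x = HH f e i j x := by
  unfold HH AA
  exact Dv_comm hf (e j) (e i) x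

lemma step0 {g f : Ed → ℝ} {e : Fin d → Ed} (hgpos : ∀ x, 0 < g x) (hg : ContDiff ℝ (⊤ : ℕ∞) g)
    (hf : ContDiff ℝ (⊤ : ℕ∞) f) (x : Ed) :
    TT g f e x * g x = -∑ i, Dv (GA g f e i) (e i) x := by
  have h : ∀ i : Fin d, Dv (GA g f e i) (e i) x
      = g x * BB g e i x * AA f e i x + g x * HH f e i i x :=
    fun i => stepA hgpos hg hf i i x
  simp only [h]
  unfold TT
  rw [Finset.sum_add_distrib, neg_add, sub_mul, neg_mul, Finset.sum_mul, Finset.sum_mul]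
  have h1 : ∑ i, HH f e i i x * g x = ∑ i, g x * HH f e i i x :=
    Finset.sum_congr rfl fun i _ => mul_comm _ _
  have h2 : ∑ i, BB g e i x * AA f e i x * g x = ∑ i, g x * BB g e i x * AA f e i x :=
    Finset.sum_congr rfl fun i _ => by ring
  rw [h1, h2]
  ring

lemma step2 {g f : Ed → ℝ} {e : Fin d → Ed} (hgpos : ∀ x, 0 < g x) (hg : ContDiff ℝ (⊤ : ℕ∞) g)
    (hf : ContDiff ℝ (⊤ : ℕ∞) f) (i : Fin d) (x : Ed) :
    Dv (TT g f e) (e i) x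
      = -(∑ j, Dv (HH f e j j) (e i) x)
        - ∑ j, (Dv (BB g e j) (e i) x * AA f e j x + BB g e j x * HH f e i j x) := by
  have s1 : ContDiff ℝ (⊤ : ℕ∞) (fun z : Ed => -(∑ j, HH f e j j z)) :=
    (ContDiff.sum fun j _ => hHs hf j j).neg
  have s2 : ContDiff ℝ (⊤ : ℕ∞) (fun z : Ed => ∑ j, BB g e j z * AA f e j z) :=
    ContDiff.sum fun j _ => (hBs hgpos hg j).mul (hAs hf j)
  have h0 : Dv (TT g f e) (e i) x
      = Dv (fun z => -(∑ j, HH f e j j z)) (e i) x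
        - Dv (fun z => ∑ j, BB g e j z * AA f e j z) (e i) x := by
    rw [← Dv_sub s1 s2]
    rfl
  rw [h0]
  rw [Dv_neg (u := fun z => ∑ j, HH f e j j z)]
  rw [Dv_sum (F := fun j => HH f e j j) Finset.univ (fun j => hHs hf j j) (e i) x]
  rw [Dv_sum (F := fun j => fun z => BB g e j z * AA f e j z) Finset.univ
    (fun j => (hBs hgpos hg j).mul (hAs hf j)) (e i) x]
  congr 1
  refine Finset.sum_congr rfl fun j _ => ?_
  rw [Dv_mul (hBs hgpos hg j) (hAs hf j)]
  rfl

lemma cs_pow2 {u : Ed → ℝ} (h : HasCompactSupport u) :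
    HasCompactSupport (fun x => u x ^ 2) :=
  h.comp_left (g := fun t : ℝ => t ^ 2) (by norm_num)

theorem key {g f : Ed → ℝ} {e : Fin d → Ed} (hgpos : ∀ x, 0 < g x) (hg : ContDiff ℝ (⊤ : ℕ∞) g)
    (hf : ContDiff ℝ (⊤ : ℕ∞) f) (hfc : HasCompactSupport f) :
    ∫ x, (TT g f e x) ^ 2 * g x
      = (∫ x, (∑ i, ∑ j, (HH f e i j x) ^ 2) * g x)
        - ∫ x, (∑ i, ∑ j, AA f e i x * Dv (BB g e i) (e j) x * AA f e j x) * g x := by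
  have cA : ∀ i, Continuous (AA f e i) := fun i => (hAs hf i).continuous
  have cH : ∀ i j, Continuous (HH f e i j) := fun i j => (hHs hf i j).continuous
  have cB : ∀ i, Continuous (BB g e i) := fun i => (hBs hgpos hg i).continuous
  have cDB : ∀ i j, Continuous (Dv (BB g e i) (e j)) :=
    fun i j => (Dv_smooth (hBs hgpos hg i) _).continuous
  have cT : Continuous (TT g f e) := (hTs hgpos hg hf).continuous
  have cG : ∀ i, Continuous (GA g f e i) := fun i => (hGs hg hf i).continuous
  have cg : Continuous g := hg.continuous
  -- integrability facts
  have intTP : ∀ i : Fin d,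
      Integrable (fun x => TT g f e x * Dv (GA g f e i) (e i) x) (volume : Measure Ed) :=
    fun i => cs_int (cT.mul (Dv_smooth (hGs hg hf i) _).continuous) ((hTc hfc).mul_right)
  have intP : ∀ i j : Fin d,
      Integrable (fun x => Dv (HH f e j j) (e i) x * GA g f e i x) (volume : Measure Ed) :=
    fun i j => cs_int ((Dv_smooth (hHs hf j j) _).continuous.mul (cG i)) ((hGc i hfc).mul_left)
  have intQ : ∀ i j : Fin d,
      Integrable (fun x => Dv (BB g e j) (e i) x * AA f e j x * GA g f e i x)
        (volume : Measure Ed) :=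
    fun i j => cs_int (((cDB j i).mul (cA j)).mul (cG i)) ((hGc i hfc).mul_left)
  have intR : ∀ i j : Fin d,
      Integrable (fun x => BB g e j x * HH f e i j x * GA g f e i x) (volume : Measure Ed) :=
    fun i j => cs_int (((cB j).mul (cH i j)).mul (cG i)) ((hGc i hfc).mul_left)
  have intH2 : ∀ i j : Fin d,
      Integrable (fun x => HH f e i j x ^ 2 * g x) (volume : Measure Ed) :=
    fun i j => cs_int (((cH i j).pow 2).mul cg) ((cs_pow2 (hHc i j hfc)).mul_right)
  have intS : ∀ i j : Fin d,
      Integrable (fun x => AA f e i x * Dv (BB g e i) (e j) x * AA f e j x * g x)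
        (volume : Measure Ed) :=
    fun i j => cs_int ((((cA i).mul (cDB i j)).mul (cA j)).mul cg)
      ((((hAc i hfc).mul_right).mul_right).mul_right)
  -- Step 1
  have step1 : ∫ x, TT g f e x ^ 2 * g x
      = ∑ i, ∫ x, Dv (TT g f e) (e i) x * GA g f e i x := by
    have e1 : (fun x : Ed => TT g f e x ^ 2 * g x)
        = fun x => ∑ i, -(TT g f e x * Dv (GA g f e i) (e i) x) := by
      funext x
      have h0 : TT g f e x ^ 2 * g x = TT g f e x * (TT g f e x * g x) := by ring
      rw [h0, step0 hgpos hg hf x, mul_neg, Finset.mul_sum, ← Finset.sum_neg_distrib]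
    rw [e1, integral_finset_sum (μ := (volume : Measure Ed)) Finset.univ
      (f := fun i => fun x => -(TT g f e x * Dv (GA g f e i) (e i) x))
      (fun i _ => (intTP i).neg)]
    refine Finset.sum_congr rfl fun i _ => ?_
    rw [integral_neg, ibp (hTs hgpos hg hf) (hGs hg hf i) (hTc hfc) (e i), neg_neg]
  -- Step 2 (split the derivative of T)
  have step2' : ∀ i : Fin d, ∫ x, Dv (TT g f e) (e i) x * GA g f e i x
      = ∑ j, ((- ∫ x, Dv (HH f e j j) (e i) x * GA g f e i x)
          + ((- ∫ x, Dv (BB g e j) (e i) x * AA f e j x * GA g f e i x)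
            + (- ∫ x, BB g e j x * HH f e i j x * GA g f e i x))) := by
    intro i
    have e2 : (fun x : Ed => Dv (TT g f e) (e i) x * GA g f e i x)
        = fun x => ∑ j, (-(Dv (HH f e j j) (e i) x * GA g f e i x)
            + (-(Dv (BB g e j) (e i) x * AA f e j x * GA g f e i x)
              + -(BB g e j x * HH f e i j x * GA g f e i x))) := by
      funext x
      rw [step2 hgpos hg hf i x]
      simp only [sub_mul, neg_mul, add_mul, Finset.sum_mul, Finset.sum_add_distrib,
        Finset.sum_neg_distrib]
      ring
    rw [e2, integral_finset_sum (μ := (volume : Measure Ed)) Finset.univ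
      (f := fun j => fun x => -(Dv (HH f e j j) (e i) x * GA g f e i x)
            + (-(Dv (BB g e j) (e i) x * AA f e j x * GA g f e i x)
              + -(BB g e j x * HH f e i j x * GA g f e i x)))
      (fun j _ => ((intP i j).neg.add ((intQ i j).neg.add (intR i j).neg)))]
    refine Finset.sum_congr rfl fun j _ => ?_
    rw [integral_add (by exact (intP i j).neg) (by exact ((intQ i j).neg.add (intR i j).neg)),
      integral_add (by exact (intQ i j).neg) (by exact (intR i j).neg),
      integral_neg, integral_neg, integral_neg]
  -- Step 3 (Schwarz + second integration by parts)
  have step3 : ∀ i j : Fin d, ∫ x, Dv (HH f e j j) (e i) x * GA g f e i x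
      = (- ∫ x, BB g e j x * HH f e i j x * GA g f e i x)
        + (- ∫ x, HH f e i j x ^ 2 * g x) := by
    intro i j
    have schwarz : ∀ x, Dv (HH f e j j) (e i) x = Dv (HH f e i j) (e j) x := fun x =>
      Dv_comm (Dv_smooth hf (e j)) (e i) (e j) x
    rw [show (fun x : Ed => Dv (HH f e j j) (e i) x * GA g f e i x)
        = fun x => Dv (HH f e i j) (e j) x * GA g f e i x from
      funext fun x => by rw [schwarz x]]
    have hibp := ibp (u := HH f e i j) (w := GA g f e i)
      (hHs hf i j) (hGs hg hf i) (hHc i j hfc) (e j)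
    have h1 : ∫ x, Dv (HH f e i j) (e j) x * GA g f e i x
        = - ∫ x, HH f e i j x * Dv (GA g f e i) (e j) x := by
      rw [hibp, neg_neg]
    rw [h1]
    have e3 : (fun x : Ed => HH f e i j x * Dv (GA g f e i) (e j) x)
        = fun x => BB g e j x * HH f e i j x * GA g f e i x + HH f e i j x ^ 2 * g x := by
      funext x
      rw [stepA hgpos hg hf i j x, hHsymm hf i j x]
      simp only [GA, AA]
      ring
    rw [e3, integral_add (intR i j) (intH2 i j), neg_add]
  -- combine
  have combine : ∀ i j : Fin d,
      (- ∫ x, Dv (HH f e j j) (e i) x * GA g f e i x)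
          + ((- ∫ x, Dv (BB g e j) (e i) x * AA f e j x * GA g f e i x)
            + (- ∫ x, BB g e j x * HH f e i j x * GA g f e i x))
        = (∫ x, HH f e i j x ^ 2 * g x)
          - ∫ x, Dv (BB g e j) (e i) x * AA f e j x * GA g f e i x := by
    intro i j
    rw [step3 i j]
    ring
  have main : ∫ x, TT g f e x ^ 2 * g x
      = (∑ i, ∑ j, ∫ x, HH f e i j x ^ 2 * g x)
        - ∑ i, ∑ j, ∫ x, Dv (BB g e j) (e i) x * AA f e j x * GA g f e i x := by
    rw [step1]
    rw [Finset.sum_congr rfl fun i _ => step2' i]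
    rw [Finset.sum_congr rfl fun i _ => Finset.sum_congr rfl fun j _ => combine i j]
    rw [Finset.sum_congr rfl fun i (_ : i ∈ (Finset.univ : Finset (Fin d))) =>
      (Finset.sum_sub_distrib (s := Finset.univ) _ _)]
    exact Finset.sum_sub_distrib _ _
  -- right-hand side rewriting
  have rhs1 : ∫ x, (∑ i, ∑ j, (HH f e i j x) ^ 2) * g x
      = ∑ i, ∑ j, ∫ x, HH f e i j x ^ 2 * g x := by
    have eq1 : (fun x : Ed => (∑ i, ∑ j, (HH f e i j x) ^ 2) * g x)
        = fun x => ∑ i, ∑ j, HH f e i j x ^ 2 * g x := by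
      funext x
      rw [Finset.sum_mul]
      exact Finset.sum_congr rfl fun i _ => Finset.sum_mul _ _ _
    rw [eq1, integral_finset_sum _
      (fun i _ => integrable_finset_sum _ (fun j _ => intH2 i j))]
    exact Finset.sum_congr rfl fun i _ => integral_finset_sum _ (fun j _ => intH2 i j)
  have rhs2 : ∫ x, (∑ i, ∑ j, AA f e i x * Dv (BB g e i) (e j) x * AA f e j x) * g x
      = ∑ i, ∑ j, ∫ x, Dv (BB g e j) (e i) x * AA f e j x * GA g f e i x := by
    have eq2 : (fun x : Ed => (∑ i, ∑ j, AA f e i x * Dv (BB g e i) (e j) x * AA f e j x) * g x)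
        = fun x => ∑ i, ∑ j, AA f e i x * Dv (BB g e i) (e j) x * AA f e j x * g x := by
      funext x
      rw [Finset.sum_mul]
      exact Finset.sum_congr rfl fun i _ => Finset.sum_mul _ _ _
    rw [eq2, integral_finset_sum _
      (fun i _ => integrable_finset_sum _ (fun j _ => intS i j))]
    rw [Finset.sum_congr rfl fun i (_ : i ∈ Finset.univ) =>
      integral_finset_sum _ (fun j _ => intS i j)]
    rw [Finset.sum_comm]
    refine Finset.sum_congr rfl fun i _ => Finset.sum_congr rfl fun j _ => ?_
    refine congrArg _ (funext fun x => ?_)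
    simp only [GA, AA]
    ring
  rw [main, rhs1, rhs2]


/-- Coercivity identity on `ℝ^d`: let `g > 0` be a smooth density with logarithmic
derivative `b = ∇ log g`, and `Lf = −Δf − (b, ∇f)`. Then for `f ∈ C_c^∞(ℝ^d)`,
`∫ (Lf)² g dx = ∫ ‖∇²f‖²_{HS} g dx − ∫ (∇f, (∇b)∇f) g dx`. -/
theorem stmt12 {d : ℕ}
    (g f : EuclideanSpace ℝ (Fin d) → ℝ)
    (hgpos : ∀ x, 0 < g x) (hg : ContDiff ℝ (⊤ : ℕ∞) g)
    (hf : ContDiff ℝ (⊤ : ℕ∞) f) (hfc : HasCompactSupport f) :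
    let e : Fin d → EuclideanSpace ℝ (Fin d) := fun i => EuclideanSpace.single i 1
    let D : (EuclideanSpace ℝ (Fin d) → ℝ) → Fin d → EuclideanSpace ℝ (Fin d) → ℝ :=
      fun u i x => fderiv ℝ u x (e i)
    let b : Fin d → EuclideanSpace ℝ (Fin d) → ℝ :=
      fun i => D (fun z => Real.log (g z)) i
    let L : EuclideanSpace ℝ (Fin d) → ℝ := fun x =>
      -(∑ i, D (fun z => D f i z) i x) - ∑ i, b i x * D f i x
    ∫ x, (L x) ^ 2 * g x
      = (∫ x, (∑ i, ∑ j, (D (fun z => D f j z) i x) ^ 2) * g x)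
        - ∫ x, (∑ i, ∑ j, D f i x * D (b i) j x * D f j x) * g x := by
  intro e D b L
  exact key (e := e) hgpos hg hf hfc
end
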